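/- arXiv:2507.10114 — 6 statements merged into one kernel-verified Lean document; each statement's English description precedes it below -/
import Mathlib

section
/- Let G be a connected simple graph on n vertices. Then there exists a vertex assignment c : V(G) → {1, ..., 2^n - 1} with Σ_{v ∈ V(G)} c(v) = 2^n - 1 such that for every simple graph G' on n vertices and every vertex assignment c' : V(G') → ℤ⁺, if S(G,c) = S(G',c') then G is isomorphic to G'. -/
/-!
Weight the vertices of `G` by distinct powers `1, 2, …, 2^(n-1)`. Distinct vertex sets then have
distinct sums, so `c u + c v` is a connected subgraph sum exactly when `u` and `v` are adjacent.
If `G'` has the same connected subgraph sums, each `2^j` is the sum of some vertex set `A_j` of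
`G'`; as `2^j` exceeds the total weight `2^j - 1` of `A_0, …, A_(j-1)`, the set `A_j` contains a new
vertex `x_j` of weight at most `2^j`. These `n` vertices exhaust `G'`, and since the whole of `G`
is connected, `2^n - 1` is a sum in `G'` as well, which forces `c' x_j = 2^j`. Thus `j ↦ x_j`
transports the weighting of `G` to that of `G'`, and with it the adjacency relation.
-/

/-- The set of connected subgraph sums of `G` with vertex assignment `c`. -/
def connSums {V : Type*} [Fintype V] (G : SimpleGraph V) (c : V → ℕ) : Set ℕ :=
  {N | ∃ s : Finset V, s.Nonempty ∧ (G.induce (↑s : Set V)).Connected ∧ ∑ v ∈ s, c v = N}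

open Finset Function

lemma sum_range_two_pow (n : ℕ) : ∑ i ∈ range n, 2 ^ i = 2 ^ n - 1 := by
  simpa using Nat.geomSum_eq le_rfl n

lemma sum_fin_two_pow (n : ℕ) : ∑ j : Fin n, 2 ^ (j : ℕ) = 2 ^ n - 1 := by
  rw [Fin.sum_univ_eq_sum_range (2 ^ ·), sum_range_two_pow]

lemma injective_sum_two_pow_comp {α : Type*} {g : α → ℕ} (hg : Injective g) :
    Injective fun s : Finset α => ∑ a ∈ s, 2 ^ g a := by
  intro s t hst
  apply map_injective ⟨g, hg⟩
  apply Finset.geomSum_injective le_rfl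
  simpa only [sum_map, Embedding.coeFn_mk] using hst

lemma sum_biUnion_le_sum_sum {ι α : Type*} [DecidableEq ι] [DecidableEq α] (s : Finset ι)
    (A : ι → Finset α) (w : α → ℕ) :
    ∑ a ∈ s.biUnion A, w a ≤ ∑ i ∈ s, ∑ a ∈ A i, w a := by
  induction s using Finset.induction_on with
  | empty => simp
  | insert i s hi ih =>
    rw [biUnion_insert, sum_insert hi]
    have := sum_union_inter (s₁ := A i) (s₂ := s.biUnion A) (f := w)
    omega

lemma exists_injective_le_two_pow {α : Type*} (w : α → ℕ) {k : ℕ}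
    (h : ∀ j < k, ∃ s : Finset α, ∑ a ∈ s, w a = 2 ^ j) :
    ∃ x : Fin k → α, Injective x ∧ ∀ j, w (x j) ≤ 2 ^ (j : ℕ) := by
  classical
  choose! A hA using h
  have hnew : ∀ j < k, ∃ a ∈ A j, ∀ i < j, a ∉ A i := by
    intro j hj
    by_contra! hcov
    have hsub : A j ⊆ (range j).biUnion A := fun a ha => by
      obtain ⟨i, hi, hai⟩ := hcov a ha
      exact mem_biUnion.2 ⟨i, mem_range.2 hi, hai⟩
    have : 2 ^ j ≤ 2 ^ j - 1 :=
      calc 2 ^ j = ∑ a ∈ A j, w a := (hA j hj).symm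
        _ ≤ ∑ a ∈ (range j).biUnion A, w a := sum_le_sum_of_subset hsub
        _ ≤ ∑ i ∈ range j, ∑ a ∈ A i, w a := sum_biUnion_le_sum_sum _ _ _
        _ = ∑ i ∈ range j, 2 ^ i :=
          sum_congr rfl fun i hi => hA i ((mem_range.1 hi).trans hj)
        _ = 2 ^ j - 1 := sum_range_two_pow j
    have := j.one_le_two_pow
    omega
  choose x hxA hxnew using hnew
  refine ⟨fun j => x j j.isLt, fun i j hij => ?_, fun j => ?_⟩
  · have hij : x i i.isLt = x j j.isLt := hij
    by_contra hne
    rcases Nat.lt_or_gt_of_ne (Fin.val_ne_of_ne hne) with hlt | hlt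
    · exact hxnew j j.isLt i hlt (hij ▸ hxA i i.isLt)
    · exact hxnew i i.isLt j hlt (hij.symm ▸ hxA j j.isLt)
  · rw [← hA j j.isLt]
    exact single_le_sum (fun _ _ => Nat.zero_le _) (hxA j j.isLt)

lemma exists_equiv_fin_eq_two_pow {α : Type*} [Fintype α] {n : ℕ} (hα : Fintype.card α = n)
    (w : α → ℕ) (hpow : ∀ j < n, ∃ s : Finset α, ∑ a ∈ s, w a = 2 ^ j)
    (htotal : ∃ s : Finset α, ∑ a ∈ s, w a = 2 ^ n - 1) :
    ∃ e : Fin n ≃ α, ∀ j, w (e j) = 2 ^ (j : ℕ) := by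
  obtain ⟨x, hx, hle⟩ := exists_injective_le_two_pow w hpow
  let e := Equiv.ofBijective x ((Fintype.bijective_iff_injective_and_card x).2 ⟨hx, by simp [hα]⟩)
  obtain ⟨s, hs⟩ := htotal
  have hsum : ∑ j, w (e j) = ∑ j : Fin n, 2 ^ (j : ℕ) := by
    refine le_antisymm (sum_le_sum fun j _ => hle j) ?_
    rw [e.sum_comp w, sum_fin_two_pow, ← hs]
    exact sum_le_sum_of_subset (subset_univ s)
  exact ⟨e, fun j => (sum_eq_sum_iff_of_le fun j _ => hle j).1 hsum j (mem_univ j)⟩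

namespace SimpleGraph

lemma induce_pair_connected_iff {V : Type*} (G : SimpleGraph V) {u v : V} (huv : u ≠ v) :
    (G.induce {u, v}).Connected ↔ G.Adj u v := by
  refine ⟨fun h => ?_, induce_pair_connected_of_adj⟩
  obtain ⟨⟨w, hw⟩, hadj⟩ := (h.preconnected ⟨u, by simp⟩ ⟨v, by simp⟩).nonempty_neighborSet_left
    (by simpa using huv)
  rcases hw with rfl | rfl
  · exact absurd hadj (G.loopless.irrefl w)
  · exact hadj

end SimpleGraph

section connSums

variable {V V' : Type*} [Fintype V] [Fintype V'] (G : SimpleGraph V) (c : V → ℕ)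

lemma apply_mem_connSums (v : V) : c v ∈ connSums G c :=
  ⟨{v}, singleton_nonempty v, by
    rw [coe_singleton, G.induce_singleton_eq_top]
    exact SimpleGraph.connected_top, sum_singleton c v⟩

lemma sum_mem_connSums (hG : G.Connected) : ∑ v, c v ∈ connSums G c :=
  have := hG.nonempty
  ⟨univ, univ_nonempty, by rw [coe_univ]; exact G.induceUnivIso.connected_iff.2 hG, rfl⟩

variable {G c}

lemma add_mem_connSums_iff (hc : Injective fun s : Finset V => ∑ v ∈ s, c v) {u v : V}
    (huv : u ≠ v) : c u + c v ∈ connSums G c ↔ G.Adj u v := by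
  classical
  rw [← G.induce_pair_connected_iff huv, ← sum_pair huv]
  constructor
  · rintro ⟨s, -, hs, hsum⟩
    obtain rfl := hc hsum
    rwa [coe_pair] at hs
  · exact fun h => ⟨{u, v}, insert_nonempty _ _, by rwa [coe_pair], rfl⟩

lemma nonempty_iso_of_connSums_eq {G' : SimpleGraph V'} {c' : V' → ℕ} (f : V ≃ V')
    (hf : ∀ v, c' (f v) = c v) (hc : Injective fun s : Finset V => ∑ v ∈ s, c v)
    (hS : connSums G c = connSums G' c') : Nonempty (G ≃g G') := by
  have hc' : Injective fun s : Finset V' => ∑ v ∈ s, c' v := by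
    intro s t hst
    apply map_injective f.symm.toEmbedding
    apply hc
    simpa only [sum_map, Equiv.coe_toEmbedding, ← hf, Equiv.apply_symm_apply] using hst
  refine ⟨⟨f, fun {u v} => ?_⟩⟩
  by_cases huv : u = v
  · subst huv
    simp
  rw [← add_mem_connSums_iff hc' (f.injective.ne huv), hf, hf, ← hS, add_mem_connSums_iff hc huv]

end connSums

/-- For every connected graph `G` on `n` vertices there is an assignment
`c : V(G) → {1, …, 2^n - 1}` with total sum `2^n - 1` whose collection of connected
subgraph sums determines `G` among all `n`-vertex graphs. -/
theorem stmt_0 {V : Type} [Fintype V] (n : ℕ) (hn : Fintype.card V = n)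
    (G : SimpleGraph V) (hG : G.Connected) :
    ∃ c : V → ℕ, (∀ v, 1 ≤ c v ∧ c v ≤ 2 ^ n - 1) ∧ (∑ v, c v = 2 ^ n - 1) ∧
      ∀ (V' : Type) (_ : Fintype V') (G' : SimpleGraph V') (c' : V' → ℕ),
        Fintype.card V' = n → (∀ v, 0 < c' v) →
        connSums G c = connSums G' c' → Nonempty (G ≃g G') := by
  let e := Fintype.equivFinOfCardEq hn
  let c : V → ℕ := fun v => 2 ^ (e v : ℕ)
  have hc : Injective fun s : Finset V => ∑ v ∈ s, c v :=
    injective_sum_two_pow_comp (Fin.val_injective.comp e.injective)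
  have hsum : ∑ v, c v = 2 ^ n - 1 := by
    rw [e.sum_comp (fun j : Fin n => 2 ^ (j : ℕ)), sum_fin_two_pow]
  refine ⟨c, fun v => ⟨Nat.one_le_two_pow, ?_⟩, hsum, ?_⟩
  · exact hsum ▸ single_le_sum (fun _ _ => Nat.zero_le _) (mem_univ v)
  rintro V' _ G' c' hcard' - hS
  have hsums : ∀ N ∈ connSums G c, ∃ s : Finset V', ∑ v ∈ s, c' v = N := by
    rw [hS]
    exact fun N ⟨s, _, _, hs⟩ => ⟨s, hs⟩
  obtain ⟨e', he'⟩ := exists_equiv_fin_eq_two_pow hcard' c'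
    (fun j hj => hsums _ (by simpa [c] using apply_mem_connSums G c (e.symm ⟨j, hj⟩)))
    (hsums _ (hsum ▸ sum_mem_connSums G c hG))
  exact nonempty_iso_of_connSums_eq (e.trans e') (fun v => he' (e v)) hc hS
end

section
/- Let G be a connected simple graph on n vertices. Then there exists a vertex assignment c : V(G) → {1, ..., 12n²} such that for every connected simple graph G' (on any finite number of vertices) and every vertex assignment c' : V(G') → ℤ⁺, if S(G,c) = S(G',c') then G is isomorphic to G'. -/
lemma euclid_aux {d A B r s : ℕ} (hr : r < d) (hs : s < d) (h : d*A + r = d*B + s) :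
    A = B ∧ r = s := by
  have hd : 0 < d := lt_of_le_of_lt (Nat.zero_le _) hr
  have hA : (d*A + r) / d = A := by
    rw [Nat.mul_add_div hd, Nat.div_eq_of_lt hr, Nat.add_zero]
  have hB : (d*B + s) / d = B := by
    rw [Nat.mul_add_div hd, Nat.div_eq_of_lt hs, Nat.add_zero]
  have hAB : A = B := by rw [← hA, ← hB, h]
  refine ⟨hAB, ?_⟩; subst hAB; omega

lemma sidon_aux {p : ℕ} (hp : p.Prime) {n : ℕ} (hnp : n < p)
    {i j k l : ℕ} (hi : i < n) (hj : j < n) (hk : k < n) (hl : l < n)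
    (h : (2*p*i + i*i % p) + (2*p*j + j*j % p) = (2*p*k + k*k % p) + (2*p*l + l*l % p)) :
    (i = k ∧ j = l) ∨ (i = l ∧ j = k) := by
  rcases le_or_gt n 1 with hn1 | hn1
  · left; omega
  have hp2 : p ≠ 2 := by omega
  have hppos : 0 < p := hp.pos
  have h' : 2*p*(i+j) + (i*i % p + j*j % p) = 2*p*(k+l) + (k*k % p + l*l % p) := by
    ring_nf; ring_nf at h; omega
  have hr : i*i % p + j*j % p < 2*p := by
    have := Nat.mod_lt (i*i) hppos; have := Nat.mod_lt (j*j) hppos; omega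
  have hs : k*k % p + l*l % p < 2*p := by
    have := Nat.mod_lt (k*k) hppos; have := Nat.mod_lt (l*l) hppos; omega
  obtain ⟨hsum, hrem⟩ := euclid_aux hr hs h'
  haveI : Fact p.Prime := ⟨hp⟩
  have e1 : (i : ZMod p) + j = k + l := by exact_mod_cast congrArg (Nat.cast : ℕ → ZMod p) hsum
  have e2 : (i : ZMod p)*i + j*j = k*k + l*l := by
    have := congrArg (Nat.cast : ℕ → ZMod p) hrem
    push_cast [ZMod.natCast_mod] at this
    exact_mod_cast this
  have h2 : (2 : ZMod p) * (i*j) = 2 * (k*l) := by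
    linear_combination ((i : ZMod p) + j + k + l) * e1 - e2
  have h2ne : (2 : ZMod p) ≠ 0 := by
    intro hc
    have h22 : ((2 : ℕ) : ZMod p) = 0 := by exact_mod_cast hc
    rw [ZMod.natCast_eq_zero_iff] at h22
    exact hp2 ((Nat.prime_dvd_prime_iff_eq hp Nat.prime_two).mp h22)
  have e3 : (i : ZMod p) * j = k * l := mul_left_cancel₀ h2ne h2
  have h0 : ((i : ZMod p) - k) * ((i : ZMod p) - l) = 0 := by
    linear_combination (i : ZMod p) * e1 - e3
  have hcast : ∀ a b : ℕ, a < n → b < n → (a : ZMod p) = b → a = b := by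
    intro a b ha hb hab
    have := congrArg ZMod.val hab
    rwa [ZMod.val_cast_of_lt (by omega), ZMod.val_cast_of_lt (by omega)] at this
  rcases mul_eq_zero.mp h0 with hc | hc
  · exact Or.inl ⟨hcast i k hi hk (by linear_combination hc), by
      have := hcast i k hi hk (by linear_combination hc); omega⟩
  · exact Or.inr ⟨hcast i l hi hl (by linear_combination hc), by
      have := hcast i l hi hl (by linear_combination hc); omega⟩

lemma conn_single {V : Type} (G : SimpleGraph V) (v : V) :
    (G.induce (↑({v} : Finset V) : Set V)).Connected := by
  rw [SimpleGraph.connected_iff]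
  refine ⟨fun a b => ?_, ⟨⟨v, by simp⟩⟩⟩
  have : a = b := by
    have ha := a.2; have hb := b.2
    simp only [Finset.coe_singleton, Set.mem_singleton_iff] at ha hb
    exact Subtype.ext (ha.trans hb.symm)
  exact this ▸ SimpleGraph.Reachable.refl _

lemma conn_pair {V : Type} [DecidableEq V] (G : SimpleGraph V) {u v : V} (h : G.Adj u v) :
    (G.induce (↑({u, v} : Finset V) : Set V)).Connected := by
  rw [SimpleGraph.connected_iff]
  have hu : u ∈ (↑({u, v} : Finset V) : Set V) := by simp
  refine ⟨fun a b => ?_, ⟨⟨u, hu⟩⟩⟩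
  have key : ∀ x : (↑({u, v} : Finset V) : Set V),
      (G.induce (↑({u, v} : Finset V) : Set V)).Reachable x ⟨u, hu⟩ := by
    intro x
    have hx := x.2
    simp only [Finset.coe_insert, Finset.coe_singleton, Set.mem_insert_iff,
      Set.mem_singleton_iff] at hx
    rcases hx with hx | hx
    · have : x = ⟨u, hu⟩ := Subtype.ext hx
      rw [this]
    · have hadj : (G.induce (↑({u, v} : Finset V) : Set V)).Adj x ⟨u, hu⟩ := by
        have hGa : G.Adj x.val u := by rw [hx]; exact h.symm
        exact hGa
      exact hadj.reachable
  exact (key a).trans (key b).symm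

lemma adj_of_conn_pair {V : Type} [DecidableEq V] (G : SimpleGraph V) {u v : V} (hne : u ≠ v)
    (h : (G.induce (↑({u, v} : Finset V) : Set V)).Connected) : G.Adj u v := by
  have hu : u ∈ (↑({u, v} : Finset V) : Set V) := by simp
  have hv : v ∈ (↑({u, v} : Finset V) : Set V) := by simp
  obtain ⟨w⟩ := h.preconnected ⟨u, hu⟩ ⟨v, hv⟩
  cases w with
  | nil => exact absurd rfl hne
  | cons hadj _ =>
    rename_i b _
    have hb := b.2
    simp only [Finset.coe_insert, Finset.coe_singleton, Set.mem_insert_iff,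
      Set.mem_singleton_iff] at hb
    have hGadj : G.Adj u b.val := hadj
    rcases hb with hb | hb
    · rw [hb] at hGadj; exact absurd hGadj (G.irrefl)
    · rw [hb] at hGadj; exact hGadj

lemma conn_univ {V : Type} [Fintype V] (G : SimpleGraph V) (hG : G.Connected) :
    (G.induce (↑(Finset.univ : Finset V) : Set V)).Connected := by
  rw [Finset.coe_univ]
  exact (SimpleGraph.induceUnivIso G).connected_iff.mpr hG

/-- For every connected graph `G` on `n` vertices there is an assignment
`c : V(G) → {1, …, 12n²}` whose collection of connected subgraph sums determines `G`
among all connected finite graphs. -/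
theorem stmt_2 {V : Type} [Fintype V] (n : ℕ) (hn : Fintype.card V = n)
    (G : SimpleGraph V) (hG : G.Connected) :
    ∃ c : V → ℕ, (∀ v, 1 ≤ c v ∧ c v ≤ 12 * n ^ 2) ∧
      ∀ (V' : Type) (_ : Fintype V') (G' : SimpleGraph V') (c' : V' → ℕ),
        G'.Connected → (∀ v, 0 < c' v) →
        connSums G c = connSums G' c' → Nonempty (G ≃g G') := by
  classical
  haveI hneV : Nonempty V := hG.nonempty
  have hn1 : 1 ≤ n := by rw [← hn]; exact Fintype.card_pos
  obtain ⟨p, hp, hnp, hp2n⟩ := Nat.exists_prime_lt_and_le_two_mul n (by omega)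
  have hppos : 0 < p := hp.pos
  set N2 := n ^ 2 with hN2
  have hN2pos : 1 ≤ N2 := by rw [hN2]; exact Nat.one_le_pow _ _ (by omega)
  let ι : V ≃ Fin n := Fintype.equivFinOfCardEq hn
  set A : ℕ → ℕ := fun i => 2*p*i + i*i % p with hA
  set c : V → ℕ := fun v => 8*N2 + A (ι v) with hcdef
  have hAlt : ∀ i : ℕ, i < n → A i < 4*N2 := by
    intro i hi
    have h1 : i*i % p < p := Nat.mod_lt _ hppos
    calc A i = 2*p*i + i*i % p := rfl
      _ < 2*p*i + 2*p := by omega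
      _ = 2*p*(i+1) := by ring
      _ ≤ 2*p*n := Nat.mul_le_mul_left _ (by omega)
      _ ≤ (4*n)*n := Nat.mul_le_mul_right _ (by omega)
      _ = 4*N2 := by rw [hN2]; ring
  have hcL : ∀ v, 8*N2 ≤ c v := fun v => Nat.le_add_right _ _
  have hcU : ∀ v, c v < 12*N2 := by
    intro v
    have := hAlt (ι v) (ι v).2
    simp only [hcdef]
    omega
  have hAinj : ∀ i j : Fin n, A i = A j → i = j := by
    intro i j hij
    simp only [hA] at hij
    have hr : (i : ℕ)*(i : ℕ) % p < 2*p := by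
      have := Nat.mod_lt ((i : ℕ)*(i : ℕ)) hppos; omega
    have hs : (j : ℕ)*(j : ℕ) % p < 2*p := by
      have := Nat.mod_lt ((j : ℕ)*(j : ℕ)) hppos; omega
    obtain ⟨h1, -⟩ := euclid_aux hr hs hij
    exact Fin.ext h1
  have hcinj : Function.Injective c := by
    intro a b hab
    simp only [hcdef] at hab
    have : A (ι a) = A (ι b) := by omega
    exact ι.injective (hAinj _ _ this)
  have hsidon : ∀ u v x y : V, c u + c v = c x + c y →
      (u = x ∧ v = y) ∨ (u = y ∧ v = x) := by
    intro u v x y h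
    have hAs : A (ι u) + A (ι v) = A (ι x) + A (ι y) := by
      simp only [hcdef] at h; omega
    simp only [hA] at hAs
    rcases sidon_aux hp hnp (ι u).2 (ι v).2 (ι x).2 (ι y).2 hAs with ⟨h1, h2⟩ | ⟨h1, h2⟩
    · exact Or.inl ⟨ι.injective (Fin.ext h1), ι.injective (Fin.ext h2)⟩
    · exact Or.inr ⟨ι.injective (Fin.ext h1), ι.injective (Fin.ext h2)⟩
  refine ⟨c, fun v => ⟨by have := hcL v; omega, by have := hcU v; omega⟩, ?_⟩
  intro V' instF' G' c' hG'conn hc'pos hS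
  haveI := instF'
  haveI hneV' : Nonempty V' := hG'conn.nonempty
  have hSiff : ∀ N : ℕ, N ∈ connSums G c ↔ N ∈ connSums G' c' := Set.ext_iff.mp hS
  have hmemG : ∀ N : ℕ, N ∈ connSums G c ↔
      ∃ s : Finset V, s.Nonempty ∧ (G.induce (↑s : Set V)).Connected ∧ ∑ v ∈ s, c v = N :=
    fun _ => Iff.rfl
  have hmemG' : ∀ N : ℕ, N ∈ connSums G' c' ↔
      ∃ s : Finset V', s.Nonempty ∧ (G'.induce (↑s : Set V')).Connected ∧ ∑ v ∈ s, c' v = N :=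
    fun _ => Iff.rfl
  -- every element of connSums G c is at least 8*N2
  have hSlow : ∀ N, N ∈ connSums G c → 8*N2 ≤ N := by
    intro N hN
    obtain ⟨s, ⟨v, hv⟩, -, rfl⟩ := (hmemG N).mp hN
    calc 8*N2 ≤ c v := hcL v
      _ ≤ ∑ x ∈ s, c x := Finset.single_le_sum (fun _ _ => Nat.zero_le _) hv
  -- lower bounds on c'
  have hc'L : ∀ x : V', 8*N2 ≤ c' x := by
    intro x
    apply hSlow
    apply (hSiff _).mpr
    exact (hmemG' _).mpr ⟨{x}, Finset.singleton_nonempty x, conn_single G' x, by simp⟩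
  -- total sums agree
  have htotmem : (∑ v, c v) ∈ connSums G c :=
    (hmemG _).mpr ⟨Finset.univ, Finset.univ_nonempty, conn_univ G hG, rfl⟩
  have htotmem' : (∑ v, c' v) ∈ connSums G' c' :=
    (hmemG' _).mpr ⟨Finset.univ, Finset.univ_nonempty, conn_univ G' hG'conn, rfl⟩
  have hStot : ∀ N, N ∈ connSums G c → N ≤ ∑ v, c v := by
    intro N hN
    obtain ⟨s, -, -, rfl⟩ := (hmemG N).mp hN
    exact Finset.sum_le_sum_of_subset (Finset.subset_univ s)
  have hS'tot : ∀ N, N ∈ connSums G' c' → N ≤ ∑ v, c' v := by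
    intro N hN
    obtain ⟨s, -, -, rfl⟩ := (hmemG' N).mp hN
    exact Finset.sum_le_sum_of_subset (Finset.subset_univ s)
  have htoteq : ∑ v, c' v = ∑ v, c v :=
    le_antisymm (hStot _ ((hSiff _).mpr htotmem')) (hS'tot _ ((hSiff _).mp htotmem))
  -- define f
  have hf : ∀ u : V, ∃ x : V', c' x = c u := by
    intro u
    have hmem : c u ∈ connSums G' c' := by
      apply (hSiff _).mp
      exact (hmemG _).mpr ⟨{u}, Finset.singleton_nonempty u, conn_single G u, by simp⟩
    obtain ⟨s, hsne, -, hsum⟩ := (hmemG' _).mp hmem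
    have hcard : s.card = 1 := by
      by_contra hcc
      have h2 : 2 ≤ s.card := by
        have := Finset.card_pos.mpr hsne; omega
      have hbig : 2*(8*N2) ≤ ∑ v ∈ s, c' v := by
        calc 2*(8*N2) ≤ s.card * (8*N2) := Nat.mul_le_mul_right _ h2
          _ = s.card • (8*N2) := by rw [smul_eq_mul]
          _ ≤ ∑ v ∈ s, c' v := Finset.card_nsmul_le_sum s c' _ (fun x _ => hc'L x)
      have := hcU u
      omega
    obtain ⟨x, rfl⟩ := Finset.card_eq_one.mp hcard
    exact ⟨x, by simpa using hsum⟩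
  choose f hfc using hf
  have hfinj : Function.Injective f := by
    intro a b hab
    apply hcinj
    rw [← hfc a, ← hfc b, hab]
  have hfsurj : Function.Surjective f := by
    by_contra hns
    obtain ⟨x, hx⟩ := not_forall.mp hns
    have hxmem : x ∉ Finset.univ.image f := by
      simp only [Finset.mem_image, Finset.mem_univ, true_and]
      rintro ⟨a, ha⟩
      exact hx ⟨a, ha⟩
    have hlt : ∑ y ∈ Finset.univ.image f, c' y < ∑ y ∈ Finset.univ, c' y :=
      Finset.sum_lt_sum_of_subset (Finset.subset_univ _) (Finset.mem_univ x) hxmem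
        (hc'pos x) (fun _ _ _ => Nat.zero_le _)
    have hsumim : ∑ y ∈ Finset.univ.image f, c' y = ∑ u, c u := by
      rw [Finset.sum_image (fun a _ b _ h => hfinj h)]
      simp only [hfc]
    omega
  have hc'U : ∀ x : V', c' x < 12*N2 := by
    intro x
    obtain ⟨u, rfl⟩ := hfsurj x
    rw [hfc]
    exact hcU u
  -- pair-sum classification in G
  have hpairG : ∀ N, N ∈ connSums G c → 16*N2 ≤ N → N < 24*N2 →
      ∃ x y : V, x ≠ y ∧ G.Adj x y ∧ c x + c y = N := by
    intro N hN hlo hhi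
    obtain ⟨s, hsne, hconn, rfl⟩ := (hmemG N).mp hN
    have h1 : 1 ≤ s.card := Finset.card_pos.mpr hsne
    have hcard : s.card = 2 := by
      rcases Nat.lt_or_ge s.card 2 with h | h
      · exfalso
        have hc1 : s.card = 1 := by omega
        obtain ⟨x, rfl⟩ := Finset.card_eq_one.mp hc1
        rw [Finset.sum_singleton] at hlo
        have := hcU x
        omega
      · rcases Nat.lt_or_ge s.card 3 with h3 | h3
        · omega
        · exfalso
          have hbig : 3*(8*N2) ≤ ∑ v ∈ s, c v := by
            calc 3*(8*N2) ≤ s.card * (8*N2) := Nat.mul_le_mul_right _ h3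
              _ = s.card • (8*N2) := by rw [smul_eq_mul]
              _ ≤ ∑ v ∈ s, c v := Finset.card_nsmul_le_sum s c _ (fun x _ => hcL x)
          omega
    obtain ⟨x, y, hxy, rfl⟩ := Finset.card_eq_two.mp hcard
    exact ⟨x, y, hxy, adj_of_conn_pair G hxy hconn, by rw [Finset.sum_pair hxy]⟩
  -- pair-sum classification in G'
  have hpairG' : ∀ N, N ∈ connSums G' c' → 16*N2 ≤ N → N < 24*N2 →
      ∃ x y : V', x ≠ y ∧ G'.Adj x y ∧ c' x + c' y = N := by
    intro N hN hlo hhi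
    obtain ⟨s, hsne, hconn, rfl⟩ := (hmemG' N).mp hN
    have h1 : 1 ≤ s.card := Finset.card_pos.mpr hsne
    have hcard : s.card = 2 := by
      rcases Nat.lt_or_ge s.card 2 with h | h
      · exfalso
        have hc1 : s.card = 1 := by omega
        obtain ⟨x, rfl⟩ := Finset.card_eq_one.mp hc1
        rw [Finset.sum_singleton] at hlo
        have := hc'U x
        omega
      · rcases Nat.lt_or_ge s.card 3 with h3 | h3
        · omega
        · exfalso
          have hbig : 3*(8*N2) ≤ ∑ v ∈ s, c' v := by
            calc 3*(8*N2) ≤ s.card * (8*N2) := Nat.mul_le_mul_right _ h3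
              _ = s.card • (8*N2) := by rw [smul_eq_mul]
              _ ≤ ∑ v ∈ s, c' v := Finset.card_nsmul_le_sum s c' _ (fun x _ => hc'L x)
          omega
    obtain ⟨x, y, hxy, rfl⟩ := Finset.card_eq_two.mp hcard
    exact ⟨x, y, hxy, adj_of_conn_pair G' hxy hconn, by rw [Finset.sum_pair hxy]⟩
  -- adjacency transfer
  have hiff : ∀ u v : V, G'.Adj (f u) (f v) ↔ G.Adj u v := by
    intro u v
    have hlo : 16*N2 ≤ c u + c v := by have := hcL u; have := hcL v; omega
    have hhi : c u + c v < 24*N2 := by have := hcU u; have := hcU v; omega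
    constructor
    · intro h'
      have hfufv : f u ≠ f v := h'.ne
      have hmem' : c u + c v ∈ connSums G' c' :=
        (hmemG' _).mpr ⟨{f u, f v}, ⟨f u, by simp⟩, conn_pair G' h',
          by rw [Finset.sum_pair hfufv, hfc, hfc]⟩
      obtain ⟨x, y, hxy, hadj, hsum⟩ := hpairG _ ((hSiff _).mpr hmem') hlo hhi
      rcases hsidon x y u v hsum with ⟨rfl, rfl⟩ | ⟨rfl, rfl⟩
      · exact hadj
      · exact hadj.symm
    · intro h
      have hmem : c u + c v ∈ connSums G c :=
        (hmemG _).mpr ⟨{u, v}, ⟨u, by simp⟩, conn_pair G h, by rw [Finset.sum_pair h.ne]⟩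
      obtain ⟨x, y, hxy, hadj, hsum⟩ := hpairG' _ ((hSiff _).mp hmem) hlo hhi
      obtain ⟨a, rfl⟩ := hfsurj x
      obtain ⟨b, rfl⟩ := hfsurj y
      have hab : c a + c b = c u + c v := by rw [← hfc a, ← hfc b]; exact hsum
      rcases hsidon a b u v hab with ⟨rfl, rfl⟩ | ⟨rfl, rfl⟩
      · exact hadj
      · exact hadj.symm
  exact ⟨⟨Equiv.ofBijective f ⟨hfinj, hfsurj⟩, fun {a b} => hiff a b⟩⟩
end

section
/- For every positive integer n there exists a set S = {s₁, s₂, ..., sₙ} of n distinct positive integers contained in {1, ..., 4n²} such that whenever sᵢ + s_ℓ = s_j + s_k for indices i, ℓ, j, k, one has {i, ℓ} = {j, k} (i.e., S is a Sidon set of size n inside {1, ..., 4n²}). -/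
/-- `S` is a Sidon set: `x + y = z + w` in `S` forces `{x, y} = {z, w}`. -/
def IsSidon (S : Finset ℕ) : Prop :=
  ∀ x ∈ S, ∀ y ∈ S, ∀ z ∈ S, ∀ w ∈ S,
    x + y = z + w → ({x, y} : Finset ℕ) = ({z, w} : Finset ℕ)

/-!
Erdős–Turán: for an odd prime `p`, the numbers `2 p i + (i² mod p)`, `0 ≤ i < p`, form a Sidon
set. The residues are smaller than the modulus `2 p`, so a coincidence of two pairwise sums
splits into `a + b = c + d` and `a² + b² ≡ c² + d² (mod p)`; since `2` is invertible mod `p` this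
gives `ab ≡ cd`, so `{a, b}` and `{c, d}` are the root sets of the same quadratic over `𝔽_p`.
Taking `n < p ≤ 2n` by Bertrand's postulate, the first `n` of these numbers lie below `4n²`.
-/

open Finset

theorem IsSidon.mono {S T : Finset ℕ} (hT : IsSidon T) (hST : S ⊆ T) : IsSidon S :=
  fun x hx y hy z hz w hw ↦ hT x (hST hx) y (hST hy) z (hST hz) w (hST hw)

theorem isSidon_of_card_le_one {S : Finset ℕ} (hS : S.card ≤ 1) : IsSidon S := by
  intro x hx y hy z hz w hw _
  have h := card_le_one.mp hS
  obtain ⟨rfl, rfl, rfl⟩ : y = x ∧ z = x ∧ w = x := ⟨h _ hy _ hx, h _ hz _ hx, h _ hw _ hx⟩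
  rfl

theorem Nat.eq_and_eq_of_mul_add_eq_mul_add {m q₁ r₁ q₂ r₂ : ℕ} (h₁ : r₁ < m) (h₂ : r₂ < m)
    (h : m * q₁ + r₁ = m * q₂ + r₂) : q₁ = q₂ ∧ r₁ = r₂ := by
  have hdiv {q r : ℕ} (hr : r < m) : (m * q + r) / m = q := by
    rw [Nat.mul_add_div (by omega), Nat.div_eq_of_lt hr, add_zero]
  have hq : q₁ = q₂ := by rw [← hdiv (q := q₁) h₁, h, hdiv h₂]
  subst hq
  exact ⟨rfl, by omega⟩

theorem eq_and_eq_or_eq_and_eq_of_add_eq_add_of_sq_add_sq_eq {R : Type*} [CommRing R]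
    [IsDomain R] (h2 : (2 : R) ≠ 0) {a b c d : R} (hs : a + b = c + d)
    (hq : a ^ 2 + b ^ 2 = c ^ 2 + d ^ 2) : (a = c ∧ b = d) ∨ (a = d ∧ b = c) := by
  have hprod : a * b = c * d :=
    mul_left_cancel₀ h2 (by linear_combination (a + b + c + d) * hs - hq)
  have hroots : (a - c) * (a - d) = 0 := by linear_combination a * hs - hprod
  rcases mul_eq_zero.mp hroots with hac | had
  · exact .inl ⟨sub_eq_zero.mp hac, by linear_combination hs - hac⟩
  · exact .inr ⟨sub_eq_zero.mp had, by linear_combination hs - had⟩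

def erdosTuran (p i : ℕ) : ℕ := 2 * p * i + i ^ 2 % p + 1

theorem strictMono_erdosTuran {p : ℕ} (hp : 0 < p) : StrictMono (erdosTuran p) := by
  refine strictMono_nat_of_lt_succ fun i ↦ ?_
  have := Nat.mod_lt (i ^ 2) hp
  simp only [erdosTuran, mul_add, mul_one]
  omega

theorem erdosTuran_le {p : ℕ} (hp : 0 < p) (i : ℕ) : erdosTuran p i ≤ 2 * p * (i + 1) := by
  have := Nat.mod_lt (i ^ 2) hp
  simp only [erdosTuran]
  nlinarith

theorem erdosTuran_add_erdosTuran_eq {p : ℕ} [Fact p.Prime] (hp2 : p ≠ 2) {a b c d : ℕ}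
    (ha : a < p) (hb : b < p) (hc : c < p) (hd : d < p)
    (h : erdosTuran p a + erdosTuran p b = erdosTuran p c + erdosTuran p d) :
    (a = c ∧ b = d) ∨ (a = d ∧ b = c) := by
  have hp : 0 < p := Nat.pos_of_neZero p
  obtain ⟨hs, hq⟩ : a + b = c + d ∧ a ^ 2 % p + b ^ 2 % p = c ^ 2 % p + d ^ 2 % p := by
    have := Nat.mod_lt (a ^ 2) hp; have := Nat.mod_lt (b ^ 2) hp
    have := Nat.mod_lt (c ^ 2) hp; have := Nat.mod_lt (d ^ 2) hp
    refine Nat.eq_and_eq_of_mul_add_eq_mul_add (m := 2 * p) (by omega) (by omega) ?_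
    simp only [erdosTuran] at h
    linarith
  have h2 : (2 : ZMod p) ≠ 0 := Ring.two_ne_zero (by rwa [ZMod.ringChar_zmod_n])
  have hcast {x y : ℕ} (hx : x < p) (hy : y < p) (hxy : (x : ZMod p) = y) : x = y :=
    ((ZMod.natCast_eq_natCast_iff x y p).mp hxy).eq_of_lt_of_lt hx hy
  have := congrArg (Nat.cast : ℕ → ZMod p) hq
  push_cast [ZMod.natCast_mod] at this
  rcases eq_and_eq_or_eq_and_eq_of_add_eq_add_of_sq_add_sq_eq h2
      (by exact_mod_cast congrArg (Nat.cast : ℕ → ZMod p) hs) this with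
    ⟨hac, hbd⟩ | ⟨had, hbc⟩
  · exact .inl ⟨hcast ha hc hac, hcast hb hd hbd⟩
  · exact .inr ⟨hcast ha hd had, hcast hb hc hbc⟩

theorem isSidon_image_range_erdosTuran {p : ℕ} [Fact p.Prime] (hp2 : p ≠ 2) :
    IsSidon ((range p).image (erdosTuran p)) := by
  simp only [IsSidon, mem_image, mem_range]
  rintro _ ⟨a, ha, rfl⟩ _ ⟨b, hb, rfl⟩ _ ⟨c, hc, rfl⟩ _ ⟨d, hd, rfl⟩ h
  rcases erdosTuran_add_erdosTuran_eq hp2 ha hb hc hd h with ⟨rfl, rfl⟩ | ⟨rfl, rfl⟩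
  · rfl
  · exact pair_comm _ _

theorem stmt_4_general (n : ℕ) :
    ∃ S : Finset ℕ, S.card = n ∧ S ⊆ Finset.Icc 1 (4 * n ^ 2) ∧ IsSidon S := by
  rcases le_or_gt n 1 with hn1 | hn2
  · refine ⟨Icc 1 n, by simp, Icc_subset_Icc_right (by nlinarith), ?_⟩
    exact isSidon_of_card_le_one (by simpa using hn1)
  obtain ⟨p, hp, hnp, hp2n⟩ := Nat.exists_prime_lt_and_le_two_mul n (by omega)
  have := Fact.mk hp
  refine ⟨(range n).image (erdosTuran p), ?_, ?_, ?_⟩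
  · rw [card_image_of_injective _ (strictMono_erdosTuran hp.pos).injective, card_range]
  · simp only [subset_iff, mem_image, mem_range, mem_Icc]
    rintro _ ⟨i, hi, rfl⟩
    refine ⟨by simp [erdosTuran], (erdosTuran_le hp.pos i).trans ?_⟩
    calc 2 * p * (i + 1) ≤ 2 * (2 * n) * n := Nat.mul_le_mul (by omega) hi
      _ = 4 * n ^ 2 := by ring
  · exact (isSidon_image_range_erdosTuran (by omega)).mono
      (image_subset_image (range_subset_range.mpr hnp.le))

/-- For every positive `n` there is a Sidon set of `n` (distinct, positive) elements
inside `{1, …, 4n²}`. -/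
theorem stmt_4 (n : ℕ) (hn : 0 < n) :
    ∃ S : Finset ℕ, S.card = n ∧ S ⊆ Finset.Icc 1 (4 * n ^ 2) ∧ IsSidon S :=
  stmt_4_general n
end

section
/- If c is an SSD assignment of the path Pₙ with vertices v₁, ..., vₙ in path order, then the set of partial sums {s_k = Σ_{i=1}^{k} c(vᵢ) : 1 ≤ k ≤ n} is a Sidon set of size n contained in {1, ..., Σ_{i=1}^{n} c(vᵢ)}. -/
/-- `c` is a subgraph sum-distinct (SSD) assignment of `G`: all values are positive and
distinct nonempty vertex subsets inducing connected subgraphs have distinct sums. -/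
def IsSSD {V : Type*} [Fintype V] (G : SimpleGraph V) (c : V → ℕ) : Prop :=
  (∀ v, 0 < c v) ∧ ∀ s t : Finset V, s.Nonempty → t.Nonempty →
    (G.induce (↑s : Set V)).Connected → (G.induce (↑t : Set V)).Connected →
    s ≠ t → ∑ v ∈ s, c v ≠ ∑ v ∈ t, c v

lemma interval_connected {n : ℕ} (s : Finset (Fin n)) (hne : s.Nonempty)
    (hconv : ∀ ⦃x y z : Fin n⦄, x ∈ s → z ∈ s → x ≤ y → y ≤ z → y ∈ s) :
    ((SimpleGraph.pathGraph n).induce (↑s : Set (Fin n))).Connected := by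
  set m := s.min' hne with hm
  have hms : m ∈ s := s.min'_mem hne
  have key : ∀ k : ℕ, ∀ x : Fin n, ∀ hx : x ∈ s, x.val = k →
      ((SimpleGraph.pathGraph n).induce (↑s : Set (Fin n))).Reachable ⟨m, hms⟩ ⟨x, hx⟩ := by
    intro k
    induction k using Nat.strong_induction_on with
    | _ k ih =>
      intro x hx hxk
      rcases eq_or_lt_of_le (s.min'_le x hx) with h | h
      · have : (⟨m, hms⟩ : (↑s : Set (Fin n))) = ⟨x, hx⟩ := Subtype.ext h
        rw [this]
      · have h' := Fin.lt_def.mp h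
        have hx0 : 0 < x.val := by omega
        set y : Fin n := ⟨x.val - 1, lt_trans (Nat.sub_lt hx0 one_pos) x.isLt⟩ with hy
        have hmy : m ≤ y := by
          rw [Fin.le_def]; show m.val ≤ x.val - 1; omega
        have hyx : y ≤ x := by
          rw [Fin.le_def]; exact Nat.sub_le _ _
        have hys : y ∈ s := hconv hms hx hmy hyx
        have hadj : ((SimpleGraph.pathGraph n).induce (↑s : Set (Fin n))).Adj ⟨y, hys⟩ ⟨x, hx⟩ := by
          simp only [SimpleGraph.comap_adj, Function.Embedding.coe_subtype,
            SimpleGraph.pathGraph_adj]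
          left; show x.val - 1 + 1 = x.val; omega
        exact (ih y.val (by show x.val - 1 < k; omega) y hys rfl).trans hadj.reachable
  haveI : Nonempty (↑(↑s : Set (Fin n))) := ⟨⟨m, hms⟩⟩
  constructor
  rintro ⟨u, hu⟩ ⟨v, hv⟩
  exact (key u.val u hu rfl).symm.trans (key v.val v hv rfl)

section
variable {n : ℕ} (c : Fin n → ℕ)

lemma f_strictMono (hpos : ∀ v, 0 < c v) :
    StrictMono (fun k : Fin n => ∑ i ∈ Finset.Iic k, c i) := by
  intro a b hab
  apply Finset.sum_lt_sum_of_subset (Finset.Iic_subset_Iic.mpr hab.le) (Finset.mem_Iic.mpr le_rfl)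
    (by simp [hab.not_ge]) (hpos b)
  intros; exact Nat.zero_le _

lemma iic_split {a b : Fin n} (hab : a ≤ b) :
    ∑ i ∈ Finset.Iic b, c i = ∑ i ∈ Finset.Iic a, c i + ∑ i ∈ Finset.Ioc a b, c i := by
  rw [← Finset.sum_union]
  · congr 1
    ext x
    simp only [Finset.mem_union, Finset.mem_Iic, Finset.mem_Ioc, Fin.le_def, Fin.lt_def]
    have := Fin.le_def.mp hab
    omega
  · rw [Finset.disjoint_left]
    intro x hx hx'
    simp only [Finset.mem_Iic, Fin.le_def] at hx
    simp only [Finset.mem_Ioc, Fin.lt_def] at hx'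
    omega

lemma aux2 (hc : IsSSD (SimpleGraph.pathGraph n) c) {a b d e : Fin n}
    (hab : a ≤ b) (hde : d ≤ e) (had : a < d)
    (hsum : (∑ i ∈ Finset.Iic a, c i) + ∑ i ∈ Finset.Iic b, c i
      = (∑ i ∈ Finset.Iic d, c i) + ∑ i ∈ Finset.Iic e, c i) : False := by
  have hmono := f_strictMono c hc.1
  have heb : e < b := by
    by_contra h
    push_neg at h
    have h1 := hmono had
    have h2 : (∑ i ∈ Finset.Iic b, c i) ≤ ∑ i ∈ Finset.Iic e, c i := hmono.monotone h
    simp only at h1 h2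
    omega
  have h1 := iic_split c had.le
  have h2 := iic_split c heb.le
  have hAB : ∑ i ∈ Finset.Ioc a d, c i = ∑ i ∈ Finset.Ioc e b, c i := by omega
  refine hc.2 (Finset.Ioc a d) (Finset.Ioc e b) ⟨d, by simp [had]⟩ ⟨b, by simp [heb]⟩
    (interval_connected _ ⟨d, by simp [had]⟩ ?_) (interval_connected _ ⟨b, by simp [heb]⟩ ?_)
    ?_ hAB
  · intro x y z hx hz hxy hyz
    simp only [Finset.mem_Ioc] at *
    exact ⟨lt_of_lt_of_le hx.1 hxy, le_trans hyz hz.2⟩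
  · intro x y z hx hz hxy hyz
    simp only [Finset.mem_Ioc] at *
    exact ⟨lt_of_lt_of_le hx.1 hxy, le_trans hyz hz.2⟩
  · intro heq
    have : d ∈ Finset.Ioc e b := heq ▸ Finset.mem_Ioc.mpr ⟨had, le_refl d⟩
    exact absurd (Finset.mem_Ioc.mp this).1 hde.not_gt

lemma aux (hc : IsSSD (SimpleGraph.pathGraph n) c) {a b d e : Fin n}
    (hab : a ≤ b) (hde : d ≤ e)
    (hsum : (∑ i ∈ Finset.Iic a, c i) + ∑ i ∈ Finset.Iic b, c i
      = (∑ i ∈ Finset.Iic d, c i) + ∑ i ∈ Finset.Iic e, c i) : a = d ∧ b = e := by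
  have hmono := f_strictMono c hc.1
  rcases lt_trichotomy a d with h | h | h
  · exact absurd (aux2 c hc hab hde h hsum) not_false
  · subst h
    have : b = e := hmono.injective (Nat.add_left_cancel hsum)
    exact ⟨rfl, this⟩
  · exact absurd (aux2 c hc hde hab h hsum.symm) not_false

end

/-- See paper. -/
theorem stmt_6 (n : ℕ) (c : Fin n → ℕ) (hc : IsSSD (SimpleGraph.pathGraph n) c) :
    letI S : Finset ℕ := Finset.univ.image (fun k : Fin n => ∑ i ∈ Finset.Iic k, c i)
    S.card = n ∧ S ⊆ Finset.Icc 1 (∑ i, c i) ∧ IsSidon S := by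
  have hmono := f_strictMono c hc.1
  refine ⟨?_, ?_, ?_⟩
  · rw [Finset.card_image_of_injective _ hmono.injective, Finset.card_univ, Fintype.card_fin]
  · intro x hx
    simp only [Finset.mem_image, Finset.mem_univ, true_and] at hx
    obtain ⟨k, rfl⟩ := hx
    refine Finset.mem_Icc.mpr ⟨?_, ?_⟩
    · calc 1 ≤ c k := hc.1 k
        _ ≤ _ := Finset.single_le_sum (fun _ _ => Nat.zero_le _) (Finset.mem_Iic.mpr le_rfl)
    · exact Finset.sum_le_sum_of_subset (Finset.subset_univ _)
  · intro x hx y hy z hz w hw hsum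
    simp only [Finset.mem_image, Finset.mem_univ, true_and] at hx hy hz hw
    obtain ⟨a, rfl⟩ := hx
    obtain ⟨b, rfl⟩ := hy
    obtain ⟨d, rfl⟩ := hz
    obtain ⟨e, rfl⟩ := hw
    rcases le_total a b with hab | hab
    · rcases le_total d e with hde | hde
      · obtain ⟨h1, h2⟩ := aux c hc hab hde hsum
        rw [h1, h2]
      · obtain ⟨h1, h2⟩ := aux c hc hab hde (by omega)
        rw [h1, h2, Finset.pair_comm]
    · rcases le_total d e with hde | hde
      · obtain ⟨h1, h2⟩ := aux c hc hab hde (by omega)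
        rw [h1, h2, Finset.pair_comm]
      · obtain ⟨h1, h2⟩ := aux c hc hab hde (by omega)
        rw [h1, h2]
end

section
/- For every n ≥ 1, m(Kₙ) ≤ m(S_{n+1}), where Kₙ is the complete graph on n vertices and S_{n+1} = K_{1,n} is the star on n+1 vertices. -/
/-- `m(G)`: the minimum over all SSD assignments `c` of `G` of the maximum weight. -/
noncomputable def mval {V : Type*} [Fintype V] (G : SimpleGraph V) : ℕ :=
  sInf {N | ∃ c : V → ℕ, IsSSD G c ∧ Finset.univ.sup c = N}

/-- `M(G)`: the minimum total weight of an SSD assignment of `G`. -/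
noncomputable def Mval {V : Type*} [Fintype V] (G : SimpleGraph V) : ℕ :=
  sInf {N | ∃ c : V → ℕ, IsSSD G c ∧ ∑ v, c v = N}

/-- The star `S_{n+1} = K_{1,n}`: vertex `0` joined to the `n` other vertices. -/
def starGraph (n : ℕ) : SimpleGraph (Fin (n + 1)) where
  Adj i j := i ≠ j ∧ (i = 0 ∨ j = 0)
  symm := by constructor; intro i j h; exact ⟨h.1.symm, h.2.symm⟩
  loopless := by constructor; intro i h; exact h.1 rfl

/-!
Restricting an optimal SSD assignment of the star to its leaves gives an SSD assignment of `Kₙ`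
with no larger maximum: every set of leaves together with the centre induces a connected subgraph
of the star, so distinct sets of leaves already have distinct sums. An optimal assignment exists
because powers of two are an SSD assignment of every graph.
-/

open Finset

section mval

variable {V : Type*} [Fintype V] {G : SimpleGraph V}

theorem mval_le_of_isSSD {c : V → ℕ} (hc : IsSSD G c) : mval G ≤ univ.sup c :=
  Nat.sInf_le ⟨c, hc, rfl⟩

theorem exists_isSSD_sup_eq_mval {c : V → ℕ} (hc : IsSSD G c) :
    ∃ c : V → ℕ, IsSSD G c ∧ univ.sup c = mval G :=
  Nat.sInf_mem (s := {N | ∃ c : V → ℕ, IsSSD G c ∧ univ.sup c = N}) ⟨_, c, hc, rfl⟩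

end mval

theorem isSSD_two_pow {m : ℕ} (G : SimpleGraph (Fin m)) :
    IsSSD G fun v => 2 ^ (v : ℕ) := by
  refine ⟨fun v => Nat.two_pow_pos _, fun s t _ _ _ _ hst hsum => hst ?_⟩
  refine map_injective Fin.valEmbedding (geomSum_injective le_rfl ?_)
  simpa only [sum_map, Fin.valEmbedding_apply] using hsum

theorem starGraph_induce_connected_of_zero_mem {n : ℕ} {A : Finset (Fin (n + 1))}
    (h0 : 0 ∈ A) : ((starGraph n).induce (A : Set (Fin (n + 1)))).Connected := by
  have reach_centre : ∀ w : (A : Set (Fin (n + 1))),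
      ((starGraph n).induce _).Reachable w ⟨0, h0⟩ := by
    intro w
    by_cases hw : (w : Fin (n + 1)) = 0
    · rw [show w = ⟨0, h0⟩ from Subtype.ext hw]
    · exact SimpleGraph.Adj.reachable ⟨hw, Or.inr rfl⟩
  exact (SimpleGraph.connected_iff _).2
    ⟨fun u v => (reach_centre u).trans (reach_centre v).symm, ⟨⟨0, h0⟩⟩⟩

def withCentre {n : ℕ} (s : Finset (Fin n)) : Finset (Fin (n + 1)) :=
  cons 0 (s.map (Fin.succEmb n)) (by simp [Fin.succ_ne_zero])

theorem withCentre_injective (n : ℕ) : Function.Injective (withCentre (n := n)) := by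
  intro s t h
  have h' := congrArg (Finset.erase · 0) h
  simp only [withCentre, cons_eq_insert] at h'
  rwa [erase_insert (by simp [Fin.succ_ne_zero]), erase_insert (by simp [Fin.succ_ne_zero]),
    (map_injective _).eq_iff] at h'

theorem sum_withCentre {n : ℕ} (s : Finset (Fin n)) (c : Fin (n + 1) → ℕ) :
    ∑ v ∈ withCentre s, c v = c 0 + ∑ i ∈ s, c i.succ := by
  rw [withCentre, sum_cons, sum_map]
  rfl

theorem IsSSD.comp_succ_of_starGraph {n : ℕ} {c : Fin (n + 1) → ℕ} (hc : IsSSD (starGraph n) c)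
    (G : SimpleGraph (Fin n)) : IsSSD G (c ∘ Fin.succ) := by
  refine ⟨fun v => hc.1 _, fun s t _ _ _ _ hst hsum => ?_⟩
  refine hc.2 (withCentre s) (withCentre t) ⟨0, mem_cons_self _ _⟩ ⟨0, mem_cons_self _ _⟩
    (starGraph_induce_connected_of_zero_mem (mem_cons_self _ _))
    (starGraph_induce_connected_of_zero_mem (mem_cons_self _ _))
    ((withCentre_injective n).ne hst) ?_
  rw [sum_withCentre, sum_withCentre]
  exact congrArg (c 0 + ·) hsum

theorem sup_comp_succ_le {n : ℕ} (c : Fin (n + 1) → ℕ) : univ.sup (c ∘ Fin.succ) ≤ univ.sup c :=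
  Finset.sup_le fun i _ => le_sup (f := c) (mem_univ i.succ)

theorem stmt_8_general (n : ℕ) :
    mval (⊤ : SimpleGraph (Fin n)) ≤ mval (starGraph n) := by
  obtain ⟨c, hc, hc_sup⟩ := exists_isSSD_sup_eq_mval (isSSD_two_pow (starGraph n))
  calc mval (⊤ : SimpleGraph (Fin n))
      ≤ univ.sup (c ∘ Fin.succ) := mval_le_of_isSSD (hc.comp_succ_of_starGraph ⊤)
    _ ≤ univ.sup c := sup_comp_succ_le c
    _ = mval (starGraph n) := hc_sup

/-- `m(Kₙ) ≤ m(S_{n+1})`. -/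
theorem stmt_8 (n : ℕ) (hn : 1 ≤ n) :
    mval (⊤ : SimpleGraph (Fin n)) ≤ mval (starGraph n) :=
  stmt_8_general n
end

section
/- Let G be a simple graph on n vertices, let c : V(G) → ℤ⁺ be a vertex assignment, and let μ = min_{v ∈ V(G)} c(v). Then for every real (or integer) a, the number of nonempty vertex subsets s ⊆ V(G) inducing a connected subgraph of G whose sum Σ_{v ∈ s} c(v) lies in the half-open interval [a, a + μ) is at most the binomial coefficient C(n, ⌊n/2⌋). In particular, |S(G,c) ∩ [a, a + μ)| ≤ C(n, ⌊n/2⌋). -/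
/-!
Every weight is at least `μ`, so enlarging a vertex set strictly raises its weight by at least
`μ`; hence the vertex sets with weight in a window `[a, a + μ)` form an antichain, and
Sperner's theorem bounds their number by `C(n, ⌊n/2⌋)`. Distinct sums come from distinct sets.
-/

theorem Finset.isAntichain_setOf_sum_mem_Ico {α : Type*} (c : α → ℕ) {m : ℕ}
    (hm : ∀ v, m ≤ c v) (a : ℕ) :
    IsAntichain (· ⊆ ·) {s : Finset α | ∑ v ∈ s, c v ∈ Set.Ico a (a + m)} := by
  classical
  rintro s ⟨hs, -⟩ t ⟨-, ht⟩ hne hst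
  obtain ⟨v, hvt, hvs⟩ := Finset.exists_of_ssubset (hst.ssubset_of_ne hne)
  have hv : c v ≤ ∑ u ∈ t \ s, c u :=
    Finset.single_le_sum (fun _ _ => Nat.zero_le _) (Finset.mem_sdiff.2 ⟨hvt, hvs⟩)
  have hsplit : ∑ u ∈ t \ s, c u + ∑ u ∈ s, c u = ∑ u ∈ t, c u := Finset.sum_sdiff hst
  have hmv := hm v
  omega

theorem Set.ncard_le_choose_of_isAntichain {V : Type*} [Fintype V] {A : Set (Finset V)}
    (hA : IsAntichain (· ⊆ ·) A) :
    A.ncard ≤ (Fintype.card V).choose (Fintype.card V / 2) := by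
  classical
  have hfin : A.Finite := Set.toFinite A
  rw [← hfin.coe_toFinset] at hA ⊢
  rw [Set.ncard_coe_finset]
  exact hA.sperner

theorem stmt_14_general {V : Type*} [Fintype V] [Nonempty V] (n : ℕ) (hn : Fintype.card V = n)
    (G : SimpleGraph V) (c : V → ℕ) (a : ℕ) :
    letI μ : ℕ := Finset.univ.inf' Finset.univ_nonempty c
    {s : Finset V | s.Nonempty ∧ (G.induce (↑s : Set V)).Connected ∧
        (∑ v ∈ s, c v) ∈ Set.Ico a (a + μ)}.ncard ≤ n.choose (n / 2) ∧
      (connSums G c ∩ Set.Ico a (a + μ)).ncard ≤ n.choose (n / 2) := by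
  set μ : ℕ := Finset.univ.inf' Finset.univ_nonempty c
  set A : Set (Finset V) := {s | s.Nonempty ∧ (G.induce (↑s : Set V)).Connected ∧
      (∑ v ∈ s, c v) ∈ Set.Ico a (a + μ)}
  have hanti : IsAntichain (· ⊆ ·) A :=
    (Finset.isAntichain_setOf_sum_mem_Ico c (fun v => Finset.inf'_le c (Finset.mem_univ v)) a
      ).subset fun s hs => hs.2.2
  have hcard : A.ncard ≤ n.choose (n / 2) := hn ▸ Set.ncard_le_choose_of_isAntichain hanti
  have hsums : connSums G c ∩ Set.Ico a (a + μ) ⊆ (fun s : Finset V => ∑ v ∈ s, c v) '' A := by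
    rintro N ⟨⟨s, hs, hconn, rfl⟩, hN⟩
    exact ⟨s, ⟨hs, hconn, hN⟩, rfl⟩
  refine ⟨hcard, ?_⟩
  calc (connSums G c ∩ Set.Ico a (a + μ)).ncard
      ≤ ((fun s : Finset V => ∑ v ∈ s, c v) '' A).ncard :=
        Set.ncard_le_ncard hsums ((Set.toFinite A).image _)
    _ ≤ A.ncard := Set.ncard_image_le (Set.toFinite A)
    _ ≤ n.choose (n / 2) := hcard

/-- With `μ = min_v c(v)`, at most `C(n, ⌊n/2⌋)` nonempty connected vertex subsets of an
`n`-vertex graph have weight in `[a, a + μ)`; in particular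
`|S(G,c) ∩ [a, a + μ)| ≤ C(n, ⌊n/2⌋)`. -/
theorem stmt_14 {V : Type*} [Fintype V] [Nonempty V] (n : ℕ) (hn : Fintype.card V = n)
    (G : SimpleGraph V) (c : V → ℕ) (hc : ∀ v, 0 < c v) (a : ℕ) :
    letI μ : ℕ := Finset.univ.inf' Finset.univ_nonempty c
    {s : Finset V | s.Nonempty ∧ (G.induce (↑s : Set V)).Connected ∧
        (∑ v ∈ s, c v) ∈ Set.Ico a (a + μ)}.ncard ≤ n.choose (n / 2) ∧
      (connSums G c ∩ Set.Ico a (a + μ)).ncard ≤ n.choose (n / 2) :=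
  stmt_14_general n hn G c a
end
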